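/- arXiv:2402.15763 — 2 statements merged into one kernel-verified Lean document; each statement's English description precedes it below -/
import Mathlib

section
/- The set C_S of S-crossable operators in B(H⊗H) is a complex linear subspace, and the crossing map Cross_S : C_S → B(H⊗H) is an injective complex linear map. -/
noncomputable section
open scoped InnerProductSpace ComplexConjugate

variable {H K : Type*}

/-- A realization of the Hilbert space tensor square of `H` on a Hilbert space `K`. -/
structure TensorSquare (H K : Type*) [NormedAddCommGroup H] [InnerProductSpace ℂ H]
    [NormedAddCommGroup K] [InnerProductSpace ℂ K] : Type _ where
  tmul : H → H → K
  tmul_add_left : ∀ a a' b, tmul (a + a') b = tmul a b + tmul a' b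
  tmul_add_right : ∀ a b b', tmul a (b + b') = tmul a b + tmul a b'
  tmul_smul_left : ∀ (c : ℂ) a b, tmul (c • a) b = c • tmul a b
  tmul_smul_right : ∀ (c : ℂ) a b, tmul a (c • b) = c • tmul a b
  inner_tmul : ∀ a b c d, ⟪tmul a b, tmul c d⟫_ℂ = ⟪a, c⟫_ℂ * ⟪b, d⟫_ℂ
  dense_span : Dense (↑(Submodule.span ℂ (Set.range fun p : H × H => tmul p.1 p.2)) : Set K)

/-- A densely defined closed antilinear involution `S` on `H`, together with its adjoint `S*`. -/
structure AntiInvolution (H : Type*) [NormedAddCommGroup H] [InnerProductSpace ℂ H] : Type _ where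
  dom : Submodule ℂ H
  toFun : H → H
  dense_dom : Dense (dom : Set H)
  map_add : ∀ x ∈ dom, ∀ y ∈ dom, toFun (x + y) = toFun x + toFun y
  map_smul : ∀ (c : ℂ), ∀ x ∈ dom, toFun (c • x) = (starRingEnd ℂ c) • toFun x
  invol_mem : ∀ x ∈ dom, toFun x ∈ dom
  invol : ∀ x ∈ dom, toFun (toFun x) = x
  closed_graph : IsClosed {p : H × H | p.1 ∈ dom ∧ toFun p.1 = p.2}
  adjDom : Submodule ℂ H
  adjFun : H → H
  dense_adjDom : Dense (adjDom : Set H)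
  adj_spec : ∀ y ∈ adjDom, ∀ x ∈ dom, ⟪adjFun y, x⟫_ℂ = ⟪toFun x, y⟫_ℂ
  adj_max : ∀ y z : H, (∀ x ∈ dom, ⟪z, x⟫_ℂ = ⟪toFun x, y⟫_ℂ) → y ∈ adjDom

section
variable [NormedAddCommGroup H] [InnerProductSpace ℂ H]
  [NormedAddCommGroup K] [InnerProductSpace ℂ K]

/-- The crossing relation (unbounded `S`): `Tc = Cross_S(T)`. -/
def CrossRelU (τ : TensorSquare H K) (S : AntiInvolution H) (T Tc : K →L[ℂ] K) : Prop :=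
  ∀ φ₁ ∈ S.dom, ∀ ψ₁ ∈ S.dom, ∀ φ₂ ∈ S.adjDom, ∀ ψ₂ ∈ S.adjDom,
    ⟪τ.tmul φ₁ φ₂, Tc (τ.tmul ψ₁ ψ₂)⟫_ℂ
      = ⟪τ.tmul φ₂ (S.adjFun ψ₂), T (τ.tmul (S.toFun φ₁) ψ₁)⟫_ℂ

/-- The crossing relation for an everywhere defined (bounded) antilinear involution `S`
with adjoint `Sstar`. -/
def CrossRelB (τ : TensorSquare H K) (S Sstar : H →SL[starRingEnd ℂ] H) (T Tc : K →L[ℂ] K) :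
    Prop :=
  ∀ φ₁ φ₂ ψ₁ ψ₂ : H,
    ⟪τ.tmul φ₁ φ₂, Tc (τ.tmul ψ₁ ψ₂)⟫_ℂ = ⟪τ.tmul φ₂ (Sstar ψ₂), T (τ.tmul (S φ₁) ψ₁)⟫_ℂ

end

/-!
Both sides of the crossing relation are linear in the pair `(T, Cross_S T)`, which gives
linearity. Uniqueness of `Cross_S T` and injectivity of `Cross_S` both reduce to the fact that an
operator on `H ⊗ H` is determined by its matrix elements `⟪a ⊗ b, A (c ⊗ d)⟫` with `a, b, c, d`
ranging over dense subsets of `H`: these matrix elements are jointly continuous, and elementary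
tensors span a dense subspace. For injectivity the dense sets are `S (dom S)` and
`S* (dom S*)`, dense because `S` and `S*` are involutions of their domains.
-/

namespace TensorSquare

variable [NormedAddCommGroup H] [InnerProductSpace ℂ H]
  [NormedAddCommGroup K] [InnerProductSpace ℂ K] (τ : TensorSquare H K)

theorem norm_tmul (a b : H) : ‖τ.tmul a b‖ = ‖a‖ * ‖b‖ := by
  have hsq : ‖τ.tmul a b‖ ^ 2 = (‖a‖ * ‖b‖) ^ 2 := by
    have h := τ.inner_tmul a b a b
    simp only [inner_self_eq_norm_sq_to_K] at h
    rw [mul_pow]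
    exact_mod_cast h
  exact (sq_eq_sq₀ (norm_nonneg _) (by positivity)).1 hsq

def tmulL : H →L[ℂ] H →L[ℂ] K :=
  LinearMap.mkContinuous₂
    (LinearMap.mk₂ ℂ τ.tmul τ.tmul_add_left τ.tmul_smul_left τ.tmul_add_right
      τ.tmul_smul_right) 1
    (fun a b => by rw [one_mul]; exact (τ.norm_tmul a b).le)

theorem continuous_tmul : Continuous fun p : H × H => τ.tmul p.1 p.2 :=
  τ.tmulL.continuous₂

theorem ext_clm {E : Type*} [NormedAddCommGroup E] [NormedSpace ℂ E] {f g : K →L[ℂ] E}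
    (h : ∀ a b, f (τ.tmul a b) = g (τ.tmul a b)) : f = g :=
  ContinuousLinearMap.ext_on τ.dense_span (by rintro _ ⟨p, rfl⟩; exact h p.1 p.2)

theorem ext_inner_tmul_left {u v : K} (h : ∀ a b, ⟪τ.tmul a b, u⟫_ℂ = ⟪τ.tmul a b, v⟫_ℂ) :
    u = v :=
  innerSL_inj.1 <| τ.ext_clm fun a b => by
    simp only [innerSL_apply_apply, ← inner_conj_symm u, ← inner_conj_symm v, h]

theorem ext_inner_tmul {A B : K →L[ℂ] K}
    (h : ∀ a b c d, ⟪τ.tmul a b, A (τ.tmul c d)⟫_ℂ = ⟪τ.tmul a b, B (τ.tmul c d)⟫_ℂ) :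
    A = B :=
  τ.ext_clm fun c d => τ.ext_inner_tmul_left fun a b => h a b c d

theorem ext_inner_tmul_of_dense {A B : K →L[ℂ] K} {s₁ s₂ s₃ s₄ : Set H}
    (h₁ : Dense s₁) (h₂ : Dense s₂) (h₃ : Dense s₃) (h₄ : Dense s₄)
    (h : ∀ a ∈ s₁, ∀ b ∈ s₂, ∀ c ∈ s₃, ∀ d ∈ s₄,
      ⟪τ.tmul a b, A (τ.tmul c d)⟫_ℂ = ⟪τ.tmul a b, B (τ.tmul c d)⟫_ℂ) :
    A = B := by
  have hcont : ∀ C : K →L[ℂ] K,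
      Continuous fun p : (H × H) × H × H => ⟪τ.tmul p.1.1 p.1.2, C (τ.tmul p.2.1 p.2.2)⟫_ℂ :=
    fun C => (τ.continuous_tmul.comp continuous_fst).inner
      (C.continuous.comp (τ.continuous_tmul.comp continuous_snd))
  have hext := (hcont A).ext_on ((h₁.prod h₂).prod (h₃.prod h₄)) (hcont B)
    (by rintro ⟨⟨a, b⟩, c, d⟩ ⟨⟨ha, hb⟩, hc, hd⟩; exact h a ha b hb c hc d hd)
  exact τ.ext_inner_tmul fun a b c d => congrFun hext ((a, b), (c, d))

end TensorSquare

namespace AntiInvolution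

variable [NormedAddCommGroup H] [InnerProductSpace ℂ H] (S : AntiInvolution H)

theorem inner_adjFun_toFun {y : H} (hy : y ∈ S.adjDom) {x : H} (hx : x ∈ S.dom) :
    ⟪S.adjFun y, S.toFun x⟫_ℂ = ⟪x, y⟫_ℂ := by
  rw [S.adj_spec y hy _ (S.invol_mem x hx), S.invol x hx]

theorem adjFun_mem {y : H} (hy : y ∈ S.adjDom) : S.adjFun y ∈ S.adjDom :=
  S.adj_max _ y fun x hx => by
    rw [← inner_conj_symm, ← S.inner_adjFun_toFun hy hx, inner_conj_symm]

theorem adjFun_adjFun {y : H} (hy : y ∈ S.adjDom) : S.adjFun (S.adjFun y) = y :=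
  S.dense_dom.eq_of_inner_left ℂ fun x hx => by
    rw [S.adj_spec _ (S.adjFun_mem hy) x hx, ← inner_conj_symm, S.inner_adjFun_toFun hy hx,
      inner_conj_symm]

theorem dense_image_toFun : Dense (S.toFun '' S.dom) :=
  S.dense_dom.mono fun x hx => ⟨S.toFun x, S.invol_mem x hx, S.invol x hx⟩

theorem dense_image_adjFun : Dense (S.adjFun '' S.adjDom) :=
  S.dense_adjDom.mono fun y hy => ⟨S.adjFun y, S.adjFun_mem hy, S.adjFun_adjFun hy⟩

end AntiInvolution

namespace CrossRelU

variable [NormedAddCommGroup H] [InnerProductSpace ℂ H]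
  [NormedAddCommGroup K] [InnerProductSpace ℂ K] {τ : TensorSquare H K} {S : AntiInvolution H}

theorem zero : CrossRelU τ S 0 0 := by
  intro _ _ _ _ _ _ _ _
  simp only [zero_apply, inner_zero_right]

theorem add {T₁ T₂ C₁ C₂ : K →L[ℂ] K} (h₁ : CrossRelU τ S T₁ C₁) (h₂ : CrossRelU τ S T₂ C₂) :
    CrossRelU τ S (T₁ + T₂) (C₁ + C₂) := by
  intro φ₁ hφ₁ ψ₁ hψ₁ φ₂ hφ₂ ψ₂ hψ₂
  simp only [add_apply, inner_add_right,
    h₁ φ₁ hφ₁ ψ₁ hψ₁ φ₂ hφ₂ ψ₂ hψ₂, h₂ φ₁ hφ₁ ψ₁ hψ₁ φ₂ hφ₂ ψ₂ hψ₂]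

theorem smul (c : ℂ) {T C : K →L[ℂ] K} (h : CrossRelU τ S T C) :
    CrossRelU τ S (c • T) (c • C) := by
  intro φ₁ hφ₁ ψ₁ hψ₁ φ₂ hφ₂ ψ₂ hψ₂
  simp only [smul_apply, inner_smul_right, h φ₁ hφ₁ ψ₁ hψ₁ φ₂ hφ₂ ψ₂ hψ₂]

theorem right_unique {T C C' : K →L[ℂ] K} (h : CrossRelU τ S T C) (h' : CrossRelU τ S T C') :
    C = C' :=
  τ.ext_inner_tmul_of_dense S.dense_dom S.dense_adjDom S.dense_dom S.dense_adjDom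
    fun a ha b hb c hc d hd => (h a ha c hc b hb d hd).trans (h' a ha c hc b hb d hd).symm

theorem left_unique {T₁ T₂ C : K →L[ℂ] K} (h₁ : CrossRelU τ S T₁ C) (h₂ : CrossRelU τ S T₂ C) :
    T₁ = T₂ :=
  τ.ext_inner_tmul_of_dense S.dense_adjDom S.dense_image_adjFun S.dense_image_toFun S.dense_dom
    fun a ha _ ⟨ψ₂, hψ₂, hb⟩ _ ⟨φ₁, hφ₁, hc⟩ d hd => by
      rw [← hb, ← hc, ← h₁ φ₁ hφ₁ d hd a ha ψ₂ hψ₂, ← h₂ φ₁ hφ₁ d hd a ha ψ₂ hψ₂]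

end CrossRelU

variable [NormedAddCommGroup H] [InnerProductSpace ℂ H]
  [NormedAddCommGroup K] [InnerProductSpace ℂ K] in
def crossableSubmodule (τ : TensorSquare H K) (S : AntiInvolution H) :
    Submodule ℂ (K →L[ℂ] K) where
  carrier := {T | ∃ C, CrossRelU τ S T C}
  zero_mem' := ⟨0, .zero⟩
  add_mem' := fun ⟨C₁, h₁⟩ ⟨C₂, h₂⟩ => ⟨C₁ + C₂, h₁.add h₂⟩
  smul_mem' := fun c _ ⟨C, h⟩ => ⟨c • C, h.smul c⟩

theorem crossable_subspace_and_crossing_injective_linear_general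
    [NormedAddCommGroup H] [InnerProductSpace ℂ H]
    [NormedAddCommGroup K] [InnerProductSpace ℂ K]
    (τ : TensorSquare H K) (S : AntiInvolution H) :
    -- C_S is a complex linear subspace
    (∃ p : Submodule ℂ (K →L[ℂ] K),
      (p : Set (K →L[ℂ] K)) = {T | ∃ Tc : K →L[ℂ] K, CrossRelU τ S T Tc}) ∧
    -- Cross_S is well defined
    (∀ T Tc Tc' : K →L[ℂ] K, CrossRelU τ S T Tc → CrossRelU τ S T Tc' → Tc = Tc') ∧
    -- Cross_S is additive
    (∀ T₁ T₂ C₁ C₂ : K →L[ℂ] K, CrossRelU τ S T₁ C₁ → CrossRelU τ S T₂ C₂ →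
      CrossRelU τ S (T₁ + T₂) (C₁ + C₂)) ∧
    -- Cross_S is complex homogeneous
    (∀ (c : ℂ) (T C : K →L[ℂ] K), CrossRelU τ S T C → CrossRelU τ S (c • T) (c • C)) ∧
    -- Cross_S is injective
    (∀ T₁ T₂ C : K →L[ℂ] K, CrossRelU τ S T₁ C → CrossRelU τ S T₂ C → T₁ = T₂) :=
  ⟨⟨crossableSubmodule τ S, rfl⟩, fun _ _ _ => CrossRelU.right_unique,
    fun _ _ _ _ => CrossRelU.add, fun c _ _ => CrossRelU.smul c,
    fun _ _ _ => CrossRelU.left_unique⟩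

/-- The set `C_S` of `S`-crossable operators is a complex linear subspace of
`B(H ⊗ H)`, and the crossing map `Cross_S : C_S → B(H ⊗ H)` is a well-defined, injective,
complex linear map (stated here in terms of the crossing relation `CrossRelU`). -/
theorem crossable_subspace_and_crossing_injective_linear
    [NormedAddCommGroup H] [InnerProductSpace ℂ H] [CompleteSpace H]
    [NormedAddCommGroup K] [InnerProductSpace ℂ K] [CompleteSpace K]
    (τ : TensorSquare H K) (S : AntiInvolution H) :
    -- C_S is a complex linear subspace
    (∃ p : Submodule ℂ (K →L[ℂ] K),
      (p : Set (K →L[ℂ] K)) = {T | ∃ Tc : K →L[ℂ] K, CrossRelU τ S T Tc}) ∧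
    -- Cross_S is well defined
    (∀ T Tc Tc' : K →L[ℂ] K, CrossRelU τ S T Tc → CrossRelU τ S T Tc' → Tc = Tc') ∧
    -- Cross_S is additive
    (∀ T₁ T₂ C₁ C₂ : K →L[ℂ] K, CrossRelU τ S T₁ C₁ → CrossRelU τ S T₂ C₂ →
      CrossRelU τ S (T₁ + T₂) (C₁ + C₂)) ∧
    -- Cross_S is complex homogeneous
    (∀ (c : ℂ) (T C : K →L[ℂ] K), CrossRelU τ S T C → CrossRelU τ S (c • T) (c • C)) ∧
    -- Cross_S is injective
    (∀ T₁ T₂ C : K →L[ℂ] K, CrossRelU τ S T₁ C → CrossRelU τ S T₂ C → T₁ = T₂) :=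
  crossable_subspace_and_crossing_injective_linear_general τ S
end
end

section
/- Let S be a bounded antilinear involution with polar decomposition S = JΔ^{1/2}. For S-crossable T, the fourth power of the crossing map is given by Cross_S⁴(T) = (Δ⊗Δ) T (Δ^{-1}⊗Δ^{-1}). In particular, if S is antiunitary then Cross_S⁴ = identity on crossable operators. -/
noncomputable section
open scoped InnerProductSpace ComplexConjugate

variable {H K : Type*}

/-!
Crossing twice flips the two tensor factors, applying `S` on one side of `T` and `S*` on the
other. Crossing twice more undoes the flip and leaves `S*S = Δ` on the left and `SS* = Δ⁻¹` on
the right; `Δ ⊗ Δ` is symmetric on elementary tensors, so it moves through the inner product,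
and the matrix elements on elementary tensors determine an operator by density.
-/

namespace TensorSquare

variable [NormedAddCommGroup H] [InnerProductSpace ℂ H]
  [NormedAddCommGroup K] [InnerProductSpace ℂ K] (τ : TensorSquare H K)

theorem continuousLinearMap_ext {E : Type*} [TopologicalSpace E] [AddCommMonoid E] [Module ℂ E]
    [T2Space E] {f g : K →L[ℂ] E} (h : ∀ a b, f (τ.tmul a b) = g (τ.tmul a b)) : f = g :=
  ContinuousLinearMap.ext_on τ.dense_span (by rintro _ ⟨p, rfl⟩; exact h p.1 p.2)

theorem eq_of_inner_tmul {x y : K} (h : ∀ a b, ⟪τ.tmul a b, x⟫_ℂ = ⟪τ.tmul a b, y⟫_ℂ) :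
    x = y := by
  have hxy : innerSL ℂ x = innerSL ℂ y :=
    τ.continuousLinearMap_ext fun a b => by
      simp only [innerSL_apply_apply, ← inner_conj_symm x, ← inner_conj_symm y, h]
  exact ext_inner_right ℂ fun v => DFunLike.congr_fun hxy v

theorem ext_of_inner_tmul {f g : K →L[ℂ] K}
    (h : ∀ a b c d, ⟪τ.tmul a b, f (τ.tmul c d)⟫_ℂ = ⟪τ.tmul a b, g (τ.tmul c d)⟫_ℂ) :
    f = g :=
  τ.continuousLinearMap_ext fun c d => τ.eq_of_inner_tmul fun a b => h a b c d

theorem inner_tmul_apply_eq_of_symmetric {A : H → H} (hA : ∀ u v, ⟪u, A v⟫_ℂ = ⟪A u, v⟫_ℂ)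
    {D : K →L[ℂ] K} (hD : ∀ v w, D (τ.tmul v w) = τ.tmul (A v) (A w)) (a b : H) (z : K) :
    ⟪τ.tmul a b, D z⟫_ℂ = ⟪D (τ.tmul a b), z⟫_ℂ := by
  have hfun : (innerSL ℂ (τ.tmul a b)).comp D = innerSL ℂ (D (τ.tmul a b)) :=
    τ.continuousLinearMap_ext fun c d => by
      simp only [ContinuousLinearMap.comp_apply, innerSL_apply_apply, hD, inner_tmul, hA]
  exact DFunLike.congr_fun hfun z

end TensorSquare

section Crossing

variable [NormedAddCommGroup H] [InnerProductSpace ℂ H]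
  [NormedAddCommGroup K] [InnerProductSpace ℂ K]

theorem inner_adj_apply_symm {S Sstar : H →SL[starRingEnd ℂ] H}
    (hadj : ∀ x y : H, ⟪Sstar y, x⟫_ℂ = ⟪S x, y⟫_ℂ) (u v : H) :
    ⟪u, Sstar (S v)⟫_ℂ = ⟪Sstar (S u), v⟫_ℂ := by
  rw [hadj, ← inner_conj_symm, hadj, inner_conj_symm]

theorem CrossRelB.inner_tmul_twice {τ : TensorSquare H K} {S Sstar : H →SL[starRingEnd ℂ] H}
    {T T₁ T₂ : K →L[ℂ] K} (h₁ : CrossRelB τ S Sstar T T₁) (h₂ : CrossRelB τ S Sstar T₁ T₂)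
    (φ₁ φ₂ ψ₁ ψ₂ : H) :
    ⟪τ.tmul φ₁ φ₂, T₂ (τ.tmul ψ₁ ψ₂)⟫_ℂ
      = ⟪τ.tmul (Sstar ψ₂) (Sstar ψ₁), T (τ.tmul (S φ₂) (S φ₁))⟫_ℂ := by
  rw [h₂, h₁]

end Crossing

/-- `D` realizes `Δ ⊗ Δ` and `Dinv` realizes `Δ⁻¹ ⊗ Δ⁻¹`, where `Δ = S*S` and `Δ⁻¹ = SS*`;
`S` is antiunitary when `S* = S`. -/
theorem crossing_map_fourth_power_general
    [NormedAddCommGroup H] [InnerProductSpace ℂ H]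
    [NormedAddCommGroup K] [InnerProductSpace ℂ K]
    (τ : TensorSquare H K)
    (S Sstar : H →SL[starRingEnd ℂ] H)
    (hinv : ∀ x : H, S (S x) = x)
    (hadj : ∀ x y : H, ⟪Sstar y, x⟫_ℂ = ⟪S x, y⟫_ℂ)
    (D Dinv : K →L[ℂ] K)
    (hD : ∀ v w : H, D (τ.tmul v w) = τ.tmul (Sstar (S v)) (Sstar (S w)))
    (hDinv : ∀ v w : H, Dinv (τ.tmul v w) = τ.tmul (S (Sstar v)) (S (Sstar w)))
    (T T₁ T₂ T₃ T₄ : K →L[ℂ] K)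
    (h1 : CrossRelB τ S Sstar T T₁) (h2 : CrossRelB τ S Sstar T₁ T₂)
    (h3 : CrossRelB τ S Sstar T₂ T₃) (h4 : CrossRelB τ S Sstar T₃ T₄) :
    T₄ = D.comp (T.comp Dinv) ∧ ((∀ x : H, Sstar x = S x) → T₄ = T) := by
  have fourth : T₄ = D.comp (T.comp Dinv) := by
    refine τ.ext_of_inner_tmul fun a b c d => ?_
    rw [h3.inner_tmul_twice h4, h1.inner_tmul_twice h2, ContinuousLinearMap.comp_apply,
      τ.inner_tmul_apply_eq_of_symmetric (inner_adj_apply_symm hadj) hD, hD,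
      ContinuousLinearMap.comp_apply, hDinv]
  refine ⟨fourth, fun hSS => ?_⟩
  have hD_id : D = ContinuousLinearMap.id ℂ K :=
    τ.continuousLinearMap_ext fun v w => by simp only [hD, hSS, hinv, ContinuousLinearMap.id_apply]
  have hDinv_id : Dinv = ContinuousLinearMap.id ℂ K :=
    τ.continuousLinearMap_ext fun v w => by
      simp only [hDinv, hSS, hinv, ContinuousLinearMap.id_apply]
  rw [fourth, hD_id, hDinv_id, ContinuousLinearMap.id_comp, ContinuousLinearMap.comp_id]

/-- For a bounded antilinear involution `S = JΔ^{1/2}` (so `Δ = S*S` and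
`Δ⁻¹ = S S*`), the fourth power of the crossing map satisfies
`Cross_S⁴(T) = (Δ ⊗ Δ) T (Δ⁻¹ ⊗ Δ⁻¹)`; in particular `Cross_S⁴ = id` if `S` is antiunitary
(i.e. `S* = S`). Here `D` realizes `Δ ⊗ Δ` and `Dinv` realizes `Δ⁻¹ ⊗ Δ⁻¹`. -/
theorem crossing_map_fourth_power
    [NormedAddCommGroup H] [InnerProductSpace ℂ H] [CompleteSpace H]
    [NormedAddCommGroup K] [InnerProductSpace ℂ K] [CompleteSpace K]
    (τ : TensorSquare H K)
    (S Sstar : H →SL[starRingEnd ℂ] H)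
    (hinv : ∀ x : H, S (S x) = x)
    (hadj : ∀ x y : H, ⟪Sstar y, x⟫_ℂ = ⟪S x, y⟫_ℂ)
    (D Dinv : K →L[ℂ] K)
    (hD : ∀ v w : H, D (τ.tmul v w) = τ.tmul (Sstar (S v)) (Sstar (S w)))
    (hDinv : ∀ v w : H, Dinv (τ.tmul v w) = τ.tmul (S (Sstar v)) (S (Sstar w)))
    (T T₁ T₂ T₃ T₄ : K →L[ℂ] K)
    (h1 : CrossRelB τ S Sstar T T₁) (h2 : CrossRelB τ S Sstar T₁ T₂)
    (h3 : CrossRelB τ S Sstar T₂ T₃) (h4 : CrossRelB τ S Sstar T₃ T₄) :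
    T₄ = D.comp (T.comp Dinv) ∧ ((∀ x : H, Sstar x = S x) → T₄ = T) :=
  crossing_map_fourth_power_general τ S Sstar hinv hadj D Dinv hD hDinv T T₁ T₂ T₃ T₄ h1 h2 h3 h4
end
end
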